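/- Let u ∈ W_0^{1,∞}(Ω; R^n) on an open bounded Ω ⊆ R^n satisfy Du + (Du)^T ∈ E a.e. in Ω and ∫_Ω u ≠ 0, where E ⊆ Sym(n)\{0}. Then dim span E ≥ n, and moreover span E ⊇ R^n ∨ b where b = ∫_Ω u. -/

import Mathlib

noncomputable section
open Matrix MeasureTheory

/-- The (a.e. defined) Jacobian matrix of `u : ℝⁿ → ℝᵐ`. -/
def jac {m n : ℕ} (u : (Fin n → ℝ) → (Fin m → ℝ)) (x : Fin n → ℝ) :
    Matrix (Fin m) (Fin n) ℝ :=
  Matrix.of fun i j => fderiv ℝ u x (Pi.single j 1) i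

/-- The symmetric product `x ∨ y = x yᵀ + y xᵀ` of vectors in `ℝⁿ`. -/
def symProd {n : ℕ} (x y : Fin n → ℝ) : Matrix (Fin n) (Fin n) ℝ :=
  vecMulVec x y + vecMulVec y x

/-- The subspace `ℝⁿ ∨ b = {x ∨ b : x ∈ ℝⁿ}` of `n × n` matrices. -/
def symLine (n : ℕ) (b : Fin n → ℝ) : Submodule ℝ (Matrix (Fin n) (Fin n) ℝ) where
  carrier := {M | ∃ x : Fin n → ℝ, M = symProd x b}
  add_mem' := by
    rintro M N ⟨x, rfl⟩ ⟨y, rfl⟩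
    exact ⟨x + y, by ext i j; simp [symProd, vecMulVec_apply]; ring⟩
  zero_mem' := ⟨0, by ext i j; simp [symProd, vecMulVec_apply]⟩
  smul_mem' := by
    rintro c M ⟨x, rfl⟩
    exact ⟨c • x, by ext i j; simp [symProd, vecMulVec_apply]; ring⟩

/-!
Test the symmetrized gradient against the linear weight `x ↦ a ⬝ᵥ x`. Integrating by parts
(`u` is Lipschitz and vanishes off the bounded set `Ω`) gives
`∫ (a ⬝ᵥ x) (Du + Duᵀ) dx = -(a ∨ b)` with `b = ∫_Ω u`. Since `Du = 0` a.e. on the closed set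
`Ωᶜ` where `u` vanishes, the integrand lies a.e. in the closed subspace `span E`, hence so does
`a ∨ b`. Finally `a ↦ a ∨ b` is injective when `b ≠ 0`, so `ℝⁿ ∨ b` is `n`-dimensional.
-/

open Filter Module Set

theorem Submodule.integral_mem_of_ae_mem {X G : Type*} [MeasurableSpace X] {ν : Measure X}
    [NormedAddCommGroup G] [NormedSpace ℝ G] [FiniteDimensional ℝ G] (W : Submodule ℝ G)
    {f : X → G} (hf : ∀ᵐ x ∂ν, f x ∈ W) : ∫ x, f x ∂ν ∈ W := by
  by_cases hint : Integrable f ν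
  swap
  · simp [integral_undef hint]
  by_contra hnotin
  obtain ⟨φ, hφ, hφW⟩ := W.exists_dual_map_eq_bot_of_notMem hnotin inferInstance
  let ψ : StrongDual ℝ G := LinearMap.toContinuousLinearMap φ
  apply hφ
  change ψ (∫ x, f x ∂ν) = 0
  rw [← ψ.integral_comp_comm hint]
  refine integral_eq_zero_of_ae ?_
  filter_upwards [hf] with x hx
  simpa [ψ, hφW] using Submodule.mem_map_of_mem (f := φ) hx

section IntegrationByParts

variable {E F : Type*} [NormedAddCommGroup E] [NormedSpace ℝ E] [FiniteDimensional ℝ E]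
  [MeasurableSpace E] [BorelSpace E] {μ : Measure E} [μ.IsAddHaarMeasure]
  [NormedAddCommGroup F] [NormedSpace ℝ F] [FiniteDimensional ℝ F] {C : NNReal}

theorem ae_fderiv_eq_zero_of_eqOn_zero {f : E → E} {s : Set E} (hs : MeasurableSet s)
    (hf : EqOn f 0 s) : ∀ᵐ x ∂μ, x ∈ s → fderiv ℝ f x = 0 := by
  set D := {x | DifferentiableAt ℝ f x}
  have hD : MeasurableSet D := measurableSet_of_differentiableAt ℝ f
  have happrox : ApproximatesLinearOn f (0 : E →L[ℝ] E) (s ∩ D) 0 := fun x hx y hy => by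
    simp [hf hx.1, hf hy.1]
  -- At a density point of `s ∩ D`, the derivative is determined by the values of `f` on `s ∩ D`.
  have hzero := happrox.norm_fderiv_sub_le (μ := μ) (hs.inter hD) (fderiv ℝ f)
    fun x hx => hx.2.hasFDerivAt.hasFDerivWithinAt
  rw [ae_restrict_iff' (hs.inter hD)] at hzero
  filter_upwards [hzero] with x hx hxs
  by_cases hxD : x ∈ D
  · simpa using hx ⟨hxs, hxD⟩
  · exact fderiv_zero_of_not_differentiableAt hxD

theorem LipschitzWith.integral_mul_fderiv_eq_neg {g : E → ℝ} (hg : LipschitzWith C g)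
    (h'g : HasCompactSupport g) (ℓ : StrongDual ℝ E) (v : E) :
    ∫ x, ℓ x * fderiv ℝ g x v ∂μ = -(ℓ v * ∫ x, g x ∂μ) := by
  have hparts := integral_lineDeriv_mul_eq (μ := μ) ℓ.lipschitz hg h'g v
  have hℓ : ∀ x, lineDeriv ℝ ℓ x v = ℓ v := fun x => by
    rw [ℓ.differentiableAt.lineDeriv_eq_fderiv, ℓ.fderiv]
  simp only [hℓ, integral_const_mul] at hparts
  rw [hparts, ← integral_neg]
  refine integral_congr_ae ?_
  filter_upwards [hg.ae_differentiableAt] with x hx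
  rw [hx.lineDeriv_eq_fderiv, map_neg]
  ring

theorem LipschitzWith.integrable_smul_fderiv {u : E → F} (hu : LipschitzWith C u)
    (h'u : HasCompactSupport u) {ℓ : E → ℝ} (hℓ : Continuous ℓ) :
    Integrable (fun x => ℓ x • fderiv ℝ u x) μ := by
  have hDu : IntegrableOn (fderiv ℝ u) (tsupport u) μ :=
    Measure.integrableOn_of_bounded h'u.measure_lt_top.ne
      (measurable_fderiv ℝ u).aestronglyMeasurable
      (.of_forall fun _ => norm_fderiv_le_of_lipschitz ℝ hu)
  refine (hDu.continuousOn_smul hℓ.continuousOn h'u).integrable_of_forall_notMem_eq_zero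
    fun x hx => ?_
  simp [fderiv_of_notMem_tsupport ℝ hx]

theorem LipschitzWith.integral_smul_fderiv_eq_neg {u : E → F} (hu : LipschitzWith C u)
    (h'u : HasCompactSupport u) (ℓ : StrongDual ℝ E) :
    ∫ x, ℓ x • fderiv ℝ u x ∂μ = -ℓ.smulRight (∫ x, u x ∂μ) := by
  have hint := hu.integrable_smul_fderiv (μ := μ) h'u ℓ.continuous
  ext1 v
  rw [ContinuousLinearMap.integral_apply hint, SeparatingDual.eq_iff_forall_dual_eq (R := ℝ)]
  intro ψ
  have hψu : LipschitzWith (‖ψ‖₊ * C) (ψ ∘ u) := ψ.lipschitz.comp hu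
  rw [← ψ.integral_comp_comm (hint.apply_continuousLinearMap v)]
  calc ∫ x, ψ ((ℓ x • fderiv ℝ u x) v) ∂μ = ∫ x, ℓ x * fderiv ℝ (ψ ∘ u) x v ∂μ := by
        refine integral_congr_ae ?_
        filter_upwards [hu.ae_differentiableAt] with x hx
        simp [fderiv_comp x ψ.differentiableAt hx]
    _ = -(ℓ v * ∫ x, ψ (u x) ∂μ) := hψu.integral_mul_fderiv_eq_neg (h'u.comp_left ψ.map_zero) ℓ v
    _ = ψ ((-ℓ.smulRight (∫ x, u x ∂μ)) v) := by
        simp [ψ.integral_comp_comm (hu.continuous.integrable_of_hasCompactSupport h'u)]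

theorem LipschitzWith.smulRight_integral_mem {u : E → F} (hu : LipschitzWith C u)
    (h'u : HasCompactSupport u) {W : Submodule ℝ (E →L[ℝ] F)}
    (hW : ∀ᵐ x ∂μ, fderiv ℝ u x ∈ W) (ℓ : StrongDual ℝ E) :
    ℓ.smulRight (∫ x, u x ∂μ) ∈ W := by
  have hmem : ∫ x, ℓ x • fderiv ℝ u x ∂μ ∈ W :=
    W.integral_mem_of_ae_mem (hW.mono fun x hx => W.smul_mem _ hx)
  rwa [hu.integral_smul_fderiv_eq_neg h'u, neg_mem_iff] at hmem

end IntegrationByParts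

section SymmetricProduct

variable {n : ℕ}

def symProdRight (b : Fin n → ℝ) : (Fin n → ℝ) →ₗ[ℝ] Matrix (Fin n) (Fin n) ℝ where
  toFun x := symProd x b
  map_add' x y := by simp only [symProd, add_vecMulVec, vecMulVec_add]; abel
  map_smul' c x := by simp [symProd, smul_vecMulVec, vecMulVec_smul]

theorem symLine_eq_range (b : Fin n → ℝ) : symLine n b = LinearMap.range (symProdRight b) := by
  ext M
  exact ⟨fun ⟨x, hx⟩ => ⟨x, hx.symm⟩, fun ⟨x, hx⟩ => ⟨x, hx.symm⟩⟩

theorem symProdRight_injective {b : Fin n → ℝ} (hb : b ≠ 0) :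
    Function.Injective (symProdRight b) := by
  rw [← LinearMap.ker_eq_bot, LinearMap.ker_eq_bot']
  intro x hx
  have hentry : ∀ i j, x i * b j + b i * x j = 0 := fun i j => by
    simpa [symProdRight, symProd, vecMulVec_apply] using congr_fun₂ hx i j
  obtain ⟨j, hj⟩ : ∃ j, b j ≠ 0 := Function.ne_iff.1 hb
  have hxj : x j = 0 := by
    have := hentry j j
    exact (mul_eq_zero.1 (by linarith : x j * b j = 0)).resolve_right hj
  funext i
  simpa [hxj, hj] using hentry i j

theorem finrank_symLine {b : Fin n → ℝ} (hb : b ≠ 0) : finrank ℝ (symLine n b) = n := by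
  rw [symLine_eq_range, LinearMap.finrank_range_of_inj (symProdRight_injective hb),
    finrank_fin_fun]

def symmetrizedMatrix : ((Fin n → ℝ) →L[ℝ] (Fin n → ℝ)) →ₗ[ℝ] Matrix (Fin n) (Fin n) ℝ where
  toFun L := LinearMap.toMatrix' (L : (Fin n → ℝ) →ₗ[ℝ] (Fin n → ℝ)) +
    (LinearMap.toMatrix' (L : (Fin n → ℝ) →ₗ[ℝ] (Fin n → ℝ)))ᵀ
  map_add' L M := by simp only [ContinuousLinearMap.toLinearMap_add, map_add, transpose_add]; abel
  map_smul' c L := by simp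

theorem jac_add_transpose_eq_symmetrizedMatrix (u : (Fin n → ℝ) → (Fin n → ℝ)) (x : Fin n → ℝ) :
    jac u x + (jac u x)ᵀ = symmetrizedMatrix (fderiv ℝ u x) := by
  ext i j
  simp [jac, symmetrizedMatrix]

theorem symmetrizedMatrix_smulRight_dotProduct (a b : Fin n → ℝ) :
    symmetrizedMatrix
      ((LinearMap.toContinuousLinearMap (dotProductEquiv ℝ (Fin n) a)).smulRight b) =
      symProd a b := by
  ext i j
  simp [symmetrizedMatrix, symProd, vecMulVec_apply]
  ring

end SymmetricProduct

theorem stmt15_general {n : ℕ} (Ω : Set (Fin n → ℝ)) (hΩo : IsOpen Ω)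
    (hΩb : Bornology.IsBounded Ω)
    (E : Set (Matrix (Fin n) (Fin n) ℝ))
    (u : (Fin n → ℝ) → (Fin n → ℝ)) (C : NNReal) (hu : LipschitzWith C u)
    (hu0 : ∀ x ∉ Ω, u x = 0)
    (hincl : ∀ᵐ x ∂(volume : Measure (Fin n → ℝ)), x ∈ Ω → jac u x + (jac u x)ᵀ ∈ E)
    (hint : (∫ x in Ω, u x) ≠ 0) :
    n ≤ Module.finrank ℝ (Submodule.span ℝ E) ∧
      symLine n (∫ x in Ω, u x) ≤ Submodule.span ℝ E := by
  set b := ∫ x in Ω, u x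
  have hsupp : HasCompactSupport u :=
    .intro hΩb.isCompact_closure fun x hx => hu0 x fun hxΩ => hx (subset_closure hxΩ)
  have hb : b = ∫ x, u x := setIntegral_eq_integral_of_forall_compl_eq_zero hu0
  have hDu : ∀ᵐ x, fderiv ℝ u x ∈ (Submodule.span ℝ E).comap symmetrizedMatrix := by
    filter_upwards [hincl, ae_fderiv_eq_zero_of_eqOn_zero (μ := volume) (s := Ωᶜ)
      hΩo.isClosed_compl.measurableSet fun x hx => hu0 x hx] with x hinΩ hoffΩ
    by_cases hx : x ∈ Ω
    · exact Submodule.subset_span (jac_add_transpose_eq_symmetrizedMatrix u x ▸ hinΩ hx)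
    · simp [hoffΩ hx]
  have hline : symLine n b ≤ Submodule.span ℝ E := by
    rintro _ ⟨a, rfl⟩
    rw [← symmetrizedMatrix_smulRight_dotProduct, hb]
    exact hu.smulRight_integral_mem hsupp hDu _
  exact ⟨(finrank_symLine hint).ge.trans (Submodule.finrank_mono hline), hline⟩

/-- If `u ∈ W₀^{1,∞}(Ω; ℝⁿ)` on an open bounded `Ω ⊆ ℝⁿ` satisfies
`Du + (Du)ᵀ ∈ E` a.e. in `Ω` with `E ⊆ Sym(n) \ {0}` and `∫_Ω u ≠ 0`, then
`dim span E ≥ n` and `span E ⊇ ℝⁿ ∨ b` where `b = ∫_Ω u`. -/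
theorem stmt15 {n : ℕ} (Ω : Set (Fin n → ℝ)) (hΩo : IsOpen Ω)
    (hΩb : Bornology.IsBounded Ω)
    (E : Set (Matrix (Fin n) (Fin n) ℝ))
    (hE : ∀ A ∈ E, A.IsSymm ∧ A ≠ 0)
    (u : (Fin n → ℝ) → (Fin n → ℝ)) (C : NNReal) (hu : LipschitzWith C u)
    (hu0 : ∀ x ∉ Ω, u x = 0)
    (hincl : ∀ᵐ x ∂(volume : Measure (Fin n → ℝ)), x ∈ Ω → jac u x + (jac u x)ᵀ ∈ E)
    (hint : (∫ x in Ω, u x) ≠ 0) :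
    n ≤ Module.finrank ℝ (Submodule.span ℝ E) ∧
      symLine n (∫ x in Ω, u x) ≤ Submodule.span ℝ E :=
  stmt15_general Ω hΩo hΩb E u C hu hu0 hincl hint
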